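/- arXiv:1908.11655 — 6 statements merged into one kernel-verified Lean document; each statement's English description precedes it below -/
import Mathlib

section
/- Suppose there exist a basis {w₁, …, w_d} of im(N)^⊥ and indices i, i', ℓ such that w_{ℓ',i} = w_{ℓ',i'} = 0 for all ℓ' ≠ ℓ, while w_{ℓ,i} ≠ 0 and w_{ℓ,i'} ≠ 0. Then for every j, the sensitivity c'_j(0) for the perturbation x_i⁰ ↦ x_i⁰ + s equals (w_{ℓ,i}/w_{ℓ,i'}) times the sensitivity c'_j(0) for the perturbation x_{i'}⁰ ↦ x_{i'}⁰ + s. In particular, if w_{ℓ,i} and w_{ℓ,i'} have the same sign, the two perturbations yield component-wise sensitivities of equal signs. -/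
/-- Lemma 6 of the paper: if the `i`-th and `i'`-th columns of the
conservation-law matrix `W` are both concentrated in the single row `ℓ`, then
the sensitivities for the perturbations `xᵢ⁰ ↦ xᵢ⁰ + s` and `xᵢ'⁰ ↦ xᵢ'⁰ + s`
are proportional with factor `w_{ℓ,i} / w_{ℓ,i'}`; in particular if the two
entries have the same sign, the sensitivities have component-wise equal signs. -/
theorem sensitivity_proportional_columns
    (e d r : ℕ)
    (N : Matrix (Fin e ⊕ Fin d) (Fin r) ℝ)
    (W : Matrix (Fin d) (Fin e ⊕ Fin d) ℝ)
    (hWrows : ∀ ℓ, N.vecMul (W ℓ) = 0)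
    (hWindep : LinearIndependent ℝ W)
    (hWspan : ∀ w : (Fin e ⊕ Fin d) → ℝ, N.vecMul w = 0 →
        w ∈ Submodule.span ℝ (Set.range W))
    (i i' : Fin e ⊕ Fin d) (ℓ : Fin d)
    (hzero : ∀ ℓ' : Fin d, ℓ' ≠ ℓ → W ℓ' i = 0 ∧ W ℓ' i' = 0)
    (hi : W ℓ i ≠ 0) (hi' : W ℓ i' ≠ 0)
    (J1 : Matrix (Fin e ⊕ Fin d) (Fin e ⊕ Fin d) ℝ) (hJ1 : IsUnit J1.det)
    (hrows : ∀ (ℓ' : Fin d) j, J1 (Sum.inr ℓ') j = W ℓ' j)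
    (u u' : (Fin e ⊕ Fin d) → ℝ)
    (hu : J1.mulVec u + Sum.elim (fun _ : Fin e => (0:ℝ)) (fun ℓ' => -(W ℓ' i)) = 0)
    (hu' : J1.mulVec u' + Sum.elim (fun _ : Fin e => (0:ℝ)) (fun ℓ' => -(W ℓ' i')) = 0) :
    (∀ j, u j = (W ℓ i / W ℓ i') * u' j) ∧
    (0 < W ℓ i * W ℓ i' →
      ∀ j, (u j < 0 ↔ u' j < 0) ∧ (u j = 0 ↔ u' j = 0) ∧ (0 < u j ↔ 0 < u' j)) := by
  set c : ℝ := W ℓ i / W ℓ i' with hc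
  have h1 : J1.mulVec u = Sum.elim (fun _ : Fin e => (0:ℝ)) (fun ℓ' => W ℓ' i) := by
    funext j
    have := congrFun hu j
    cases j with
    | inl a => simpa using this
    | inr b => simp only [Pi.add_apply, Sum.elim_inr, Pi.zero_apply] at this ⊢; linarith
  have h1' : J1.mulVec u' = Sum.elim (fun _ : Fin e => (0:ℝ)) (fun ℓ' => W ℓ' i') := by
    funext j
    have := congrFun hu' j
    cases j with
    | inl a => simpa using this
    | inr b => simp only [Pi.add_apply, Sum.elim_inr, Pi.zero_apply] at this ⊢; linarith
  have hkey : J1.mulVec u = J1.mulVec (c • u') := by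
    rw [Matrix.mulVec_smul, h1, h1']
    funext j
    cases j with
    | inl a => simp
    | inr b =>
      by_cases hb : b = ℓ
      · subst hb; simp [hc, div_mul_cancel₀ _ hi']
      · simp [(hzero b hb).1, (hzero b hb).2]
  have hinj : Function.Injective J1.mulVec := Matrix.mulVec_injective_iff_isUnit.2 ((Matrix.isUnit_iff_isUnit_det J1).2 hJ1)
  have huc : u = c • u' := hinj hkey
  have hprop : ∀ j, u j = c * u' j := fun j => by rw [huc]; simp
  refine ⟨hprop, fun hpos j => ?_⟩
  have hcpos : 0 < c := div_pos_iff.2 (by rcases mul_pos_iff.1 hpos with ⟨h1, h2⟩ | ⟨h1, h2⟩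
                                          · exact Or.inl ⟨h1, h2⟩
                                          · exact Or.inr ⟨h1, h2⟩)
  rw [hprop j]
  refine ⟨⟨fun h => ?_, fun h => by nlinarith⟩,
    ⟨fun h => ?_, fun h => by rw [h, mul_zero]⟩,
    ⟨fun h => ?_, fun h => mul_pos hcpos h⟩⟩
  · nlinarith
  · rcases mul_eq_zero.1 h with h | h
    · exact absurd h hcpos.ne'
    · exact h
  · nlinarith
end

section
/- Let J₁ ∈ ℝ^{n×n} be a matrix whose last d rows equal a row-reduced matrix W of conservation laws with pivot columns i₁ < … < i_d, and whose first n−d rows are the rows of the Jacobian of f_k at x with indices not in {i₁, …, i_d}. Let τ = Σ_{ℓ=1}^{d}(n − ℓ − i_ℓ). If x is a steady state that is hyperbolic and asymptotically stable relative to its stoichiometric compatibility class—so that the n−d eigenvalues of the Jacobian of f_k at x restricted to im(N) all have negative real part and the product of these eigenvalues equals (−1)^τ det J₁—then the sign of det J₁ is (−1)^{τ + n − d}. -/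
/-- A conjugation-closed multiset of complex numbers with positive real parts
has a positive real product. -/
lemma pos_real_prod : ∀ (N : Multiset ℂ), N.map (starRingEnd ℂ) = N →
    (∀ z ∈ N, 0 < z.re) → ∃ r : ℝ, 0 < r ∧ N.prod = (r : ℂ) := by
  intro N
  induction N using Multiset.strongInductionOn with
  | ih N ih =>
    intro hcl hpos
    rcases N.empty_or_exists_mem with h | ⟨a, ha⟩
    · exact ⟨1, one_pos, by simp [h]⟩
    have hinj : Function.Injective (starRingEnd ℂ) := star_injective
    have hca : (starRingEnd ℂ) a ∈ N := by
      rw [← hcl]; exact Multiset.mem_map_of_mem _ ha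
    by_cases hfix : (starRingEnd ℂ) a = a
    · have hN' : (N.erase a).map (starRingEnd ℂ) = N.erase a := by
        rw [Multiset.map_erase _ hinj, hcl, hfix]
      obtain ⟨r, hr, hprod⟩ := ih (N.erase a) (Multiset.erase_lt.mpr ha) hN'
        (fun z hz => hpos z (Multiset.mem_of_mem_erase hz))
      have haim : a.im = 0 := Complex.conj_eq_iff_im.mp hfix
      refine ⟨a.re * r, mul_pos (hpos a ha) hr, ?_⟩
      rw [← Multiset.cons_erase ha, Multiset.prod_cons, hprod]
      rw [Complex.ext_iff]; simp [haim]
    · have hca' : (starRingEnd ℂ) a ∈ N.erase a :=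
        (Multiset.mem_erase_of_ne hfix).mpr hca
      set N'' := (N.erase a).erase ((starRingEnd ℂ) a) with hN''def
      have hN''cl : N''.map (starRingEnd ℂ) = N'' := by
        rw [hN''def, Multiset.map_erase _ hinj, Multiset.map_erase _ hinj, hcl,
          Complex.conj_conj, Multiset.erase_comm]
      have hlt : N'' < N :=
        lt_of_le_of_lt (Multiset.erase_le _ _) (Multiset.erase_lt.mpr ha)
      obtain ⟨r, hr, hprod⟩ := ih N'' hlt hN''cl
        (fun z hz => hpos z (Multiset.mem_of_mem_erase (Multiset.mem_of_mem_erase hz)))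
      have hane : a ≠ 0 := by
        intro h
        have := hpos a ha
        rw [h] at this
        simp at this
      refine ⟨Complex.normSq a * r, mul_pos (Complex.normSq_pos.mpr hane) hr, ?_⟩
      rw [← Multiset.cons_erase ha, Multiset.prod_cons,
        ← Multiset.cons_erase hca', Multiset.prod_cons, hprod, ← mul_assoc,
        Complex.mul_conj]
      push_cast
      ring

/-- Sign of the determinant of the reduced Jacobian at a hyperbolic
asymptotically stable steady state: if the `n-d` nonzero eigenvalues of the
Jacobian of `f_k` (a list closed under complex conjugation, all with negative
real part) have product `(-1)^τ · det J₁`, where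
`τ = ∑_{ℓ=1}^d (n − ℓ − i_ℓ)` for the pivot indices `i_ℓ` of the row-reduced
conservation-law matrix, then `det J₁` has sign `(-1)^{τ + n − d}`. -/
theorem stable_steady_state_jacobian_sign
    (n d : ℕ) (hd : d ≤ n)
    (iidx : Fin d → Fin n) (hmono : StrictMono iidx)
    (J1 : Matrix (Fin n) (Fin n) ℝ)
    (τ : ℤ)
    (hτ : τ = ∑ ℓ : Fin d, ((n : ℤ) - ((ℓ : ℕ) + 1) - ((iidx ℓ : ℕ) + 1)))
    (lam : Fin (n - d) → ℂ)
    (hconj : ∃ σ : Equiv.Perm (Fin (n - d)),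
      ∀ i, lam (σ i) = (starRingEnd ℂ) (lam i))
    (hneg : ∀ i, (lam i).re < 0)
    (hdet : ((J1.det : ℂ)) = (-1 : ℂ) ^ τ * ∏ i, lam i) :
    0 < (-1 : ℝ) ^ (τ + (n - d : ℕ)) * J1.det := by
  obtain ⟨σ, hσ⟩ := hconj
  set N : Multiset ℂ := Finset.univ.val.map (fun i => -lam i) with hNdef
  have hcl : N.map (starRingEnd ℂ) = N := by
    rw [hNdef, Multiset.map_map]
    have h1 : ((starRingEnd ℂ) ∘ fun i => -lam i) = (fun i => -lam i) ∘ σ := by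
      funext i; simp [(hσ i).symm]
    rw [h1, ← Multiset.map_map]
    congr 1
    have h2 : (Finset.univ.map σ.toEmbedding) = (Finset.univ : Finset (Fin (n - d))) := by
      simp
    calc Multiset.map (⇑σ) Finset.univ.val
        = (Finset.univ.map σ.toEmbedding).val := rfl
      _ = Finset.univ.val := by rw [h2]
  have hposN : ∀ z ∈ N, 0 < z.re := by
    intro z hz
    rw [hNdef] at hz
    obtain ⟨i, _, rfl⟩ := Multiset.mem_map.mp hz
    simpa using hneg i
  obtain ⟨r, hr, hprod⟩ := pos_real_prod N hcl hposN
  have hNprod : N.prod = (-1 : ℂ) ^ (n - d) * ∏ i, lam i := by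
    rw [hNdef]
    have h0 : (Finset.univ.val.map (fun i : Fin (n - d) => -lam i)).prod
        = ∏ i : Fin (n - d), -lam i := rfl
    rw [h0]
    calc ∏ i : Fin (n - d), -lam i
        = ∏ i : Fin (n - d), ((-1 : ℂ) * lam i) := by simp
      _ = (∏ _i : Fin (n - d), (-1 : ℂ)) * ∏ i, lam i := Finset.prod_mul_distrib
      _ = (-1 : ℂ) ^ (n - d) * ∏ i, lam i := by simp
  have hprodlam : (∏ i, lam i) = (-1 : ℂ) ^ (n - d) * r := by
    have h2 : ((-1 : ℂ) ^ (n - d)) * ((-1 : ℂ) ^ (n - d)) = 1 := by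
      rw [← pow_add, ← two_mul, pow_mul]; norm_num
    calc (∏ i, lam i)
        = ((-1:ℂ)^(n-d) * (-1:ℂ)^(n-d)) * ∏ i, lam i := by rw [h2, one_mul]
      _ = (-1:ℂ)^(n-d) * N.prod := by rw [hNprod]; ring
      _ = (-1:ℂ)^(n-d) * r := by rw [hprod]
  have hdet' : (J1.det : ℂ) = (((-1 : ℝ) ^ τ * ((-1 : ℝ) ^ (n - d) * r) : ℝ) : ℂ) := by
    rw [hdet, hprodlam]
    push_cast
    ring
  have hdetR : J1.det = (-1 : ℝ) ^ τ * ((-1 : ℝ) ^ (n - d) * r) :=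
    Complex.ofReal_inj.mp hdet'
  rw [hdetR]
  have hne : (-1 : ℝ) ≠ 0 := by norm_num
  rw [zpow_add₀ hne]
  have h3 : ((-1 : ℝ) ^ τ) * ((-1 : ℝ) ^ τ) = 1 := by
    rw [← zpow_add₀ hne, ← two_mul, zpow_mul]; norm_num
  have h4 : ((-1 : ℝ) ^ ((n - d : ℕ) : ℤ)) = (-1 : ℝ) ^ (n - d) := zpow_natCast _ _
  calc (0:ℝ) < r := hr
    _ = ((-1:ℝ)^τ * (-1:ℝ)^τ) * (((-1:ℝ)^(n-d) * (-1:ℝ)^(n-d)) * r) := by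
        rw [h3, ← pow_add, ← two_mul, pow_mul]; norm_num
    _ = (-1:ℝ)^τ * (-1:ℝ)^((n-d : ℕ) : ℤ) * ((-1:ℝ)^τ * ((-1:ℝ)^(n-d) * r)) := by
        rw [h4]; ring
end

section
/- With k₁ = k₂ = … = k₆ = 1, consider the hybrid histidine kinase sensitivity numerator n(x₁, x₅) = k₂k₅(k₁k₃x₁ − k₄k₆x₅²) = x₁ − x₅². Then n(2,1) = 1 > 0 and n(1,2) = −3 < 0. Combined with the negativity of the denominator det J₁ at these parameter values, the sensitivity c'₁(0) of x₁ with respect to adding x₁⁰ is negative at the steady state given by (x₁, x₅) = (2,1) and positive at the steady state given by (x₁, x₅) = (1,2). Hence the concentration of HK₀₀ at steady state can decrease upon addition of HK₀₀. -/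
/-- In the hybrid histidine kinase network with all rate constants equal to 1,
the sensitivity numerator `n(x₁,x₅) = k₂k₅(k₁k₃x₁ − k₄k₆x₅²) = x₁ − x₅²`
satisfies `n(2,1) = 1 > 0` and `n(1,2) = −3 < 0`; combined with the negativity
of the Jacobian determinant, the sensitivity `c₁'(0) = n/det J₁` is negative at
the steady state `(x₁,x₅) = (2,1)` and positive at `(x₁,x₅) = (1,2)`: the
concentration of `HK₀₀` can decrease upon addition of `HK₀₀`. -/
theorem hybrid_histidine_kinase_paradoxical_sensitivity
    (Dj : ℝ → ℝ → ℝ)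
    (hDj : ∀ x₁ x₅ : ℝ, 0 < x₁ → 0 < x₅ → Dj x₁ x₅ < 0) :
    let nnum : ℝ → ℝ → ℝ := fun x₁ x₅ =>
      (1 : ℝ) * 1 * ((1 : ℝ) * 1 * x₁ - (1 : ℝ) * 1 * x₅ ^ 2)
    (nnum 2 1 = 1 ∧ 0 < nnum 2 1) ∧
    (nnum 1 2 = -3 ∧ nnum 1 2 < 0) ∧
    nnum 2 1 / Dj 2 1 < 0 ∧
    0 < nnum 1 2 / Dj 1 2 := by
  intro nnum
  have h21 : Dj 2 1 < 0 := hDj 2 1 (by norm_num) (by norm_num)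
  have h12 : Dj 1 2 < 0 := hDj 1 2 (by norm_num) (by norm_num)
  have e1 : nnum 2 1 = 1 := by norm_num [nnum]
  have e2 : nnum 1 2 = -3 := by norm_num [nnum]
  refine ⟨⟨e1, by rw [e1]; norm_num⟩, ⟨e2, by rw [e2]; norm_num⟩, ?_, ?_⟩
  · rw [e1]; exact div_neg_of_pos_of_neg one_pos h21
  · rw [e2]; exact div_pos_of_neg_of_neg (by norm_num) h12
end

section
/- Let N ∈ ℝ^{5×4} be the stoichiometric matrix of the phosphotransfer network (kernel spanned by (1,1,0,0) and (0,0,1,1)), let B₁ ∈ ℝ^{4×4} be the matrix with rows (0,1,1,0), (0,0,0,1), (0,1,0,1), (1,0,1,0), and let S₁ ⊆ ℝ⁴ be the kernel of the 2×4 matrix with rows (0,1,0,1) and (0,0,1,1), i.e., S₁ = span{(1,0,0,0), (0,−1,−1,1)}. Then for every nonzero vector u in any orthant intersected by S₁ \ {0} (i.e., u ∈ Σ(S₁ \ {0}), u ≠ 0), the sign vector of B₁ᵀ·u is not the sign vector of any nonzero element of ker(N). -/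
private lemma sgn_pos' {x : ℝ} (h : Real.sign x = 1) : 0 < x := by
  rcases lt_trichotomy x 0 with h1 | h1 | h1
  · rw [Real.sign_of_neg h1] at h; norm_num at h
  · rw [h1, Real.sign_zero] at h; norm_num at h
  · exact h1

private lemma sgn_neg' {x : ℝ} (h : Real.sign x = -1) : x < 0 := by
  rcases lt_trichotomy x 0 with h1 | h1 | h1
  · exact h1
  · rw [h1, Real.sign_zero] at h; norm_num at h
  · rw [Real.sign_of_pos h1] at h; norm_num at h

private lemma sgn_zero' {x : ℝ} (h : Real.sign x = 0) : x = 0 := by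
  rcases lt_trichotomy x 0 with h1 | h1 | h1
  · rw [Real.sign_of_neg h1] at h; norm_num at h
  · exact h1
  · rw [Real.sign_of_pos h1] at h; norm_num at h

/-- Verification of the sign-vector condition for the phosphotransfer network
(perturbation of `x₂⁰`, sensitivity of `x₁`): for every nonzero `u` lying in an
orthant met by `S₁ \ {0}` (where `S₁ = span{(1,0,0,0), (0,−1,−1,1)}`), the sign
vector of `B₁ᵀ·u` is not the sign vector of any nonzero element of `ker N`. -/
theorem phosphotransfer_sign_condition :
    let N : Matrix (Fin 5) (Fin 4) ℝ :=
      !![-1, 1, 0, 0; 1, -1, -1, 1; 0, 0, 1, -1; 1, -1, 1, -1; -1, 1, -1, 1]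
    let B₁ : Matrix (Fin 4) (Fin 4) ℝ :=
      !![0, 1, 1, 0; 0, 0, 0, 1; 0, 1, 0, 1; 1, 0, 1, 0]
    ∀ u : Fin 4 → ℝ, u ≠ 0 →
      (∃ s : Fin 4 → ℝ,
        s ∈ Submodule.span ℝ ({![1, 0, 0, 0], ![0, -1, -1, 1]} : Set (Fin 4 → ℝ)) ∧
        s ≠ 0 ∧ ∀ j, Real.sign (u j) = Real.sign (s j)) →
      ¬ ∃ v : Fin 4 → ℝ, N.mulVec v = 0 ∧ v ≠ 0 ∧
          ∀ j, Real.sign ((B₁.transpose.mulVec u) j) = Real.sign (v j) := by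
  intro N B₁ u hu hS
  rintro ⟨v, hv, hvne, hw⟩
  obtain ⟨s, hs, hsne, hsign⟩ := hS
  rw [Submodule.mem_span_pair] at hs
  obtain ⟨a, b, hab⟩ := hs
  -- components of s
  have hs1 : s 1 = -b := by rw [← hab]; simp
  have hs2 : s 2 = -b := by rw [← hab]; simp
  have hs3 : s 3 = b := by rw [← hab]; simp
  -- kernel equations for v
  have hk0 : -v 0 + v 1 = 0 := by
    have := congrFun hv 0
    simpa [N, Matrix.mulVec, dotProduct, Fin.sum_univ_succ] using this
  have hk2 : v 2 - v 3 = 0 := by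
    have := congrFun hv 2
    simpa [N, Matrix.mulVec, dotProduct, Fin.sum_univ_succ, sub_eq_add_neg] using this
  have hv1 : v 1 = v 0 := by linarith
  have hv3 : v 3 = v 2 := by linarith
  -- components of B₁ᵀ u
  have hw0 : Real.sign (u 3) = Real.sign (v 0) := by
    have := hw 0
    simpa [B₁, Matrix.mulVec, dotProduct, Fin.sum_univ_succ] using this
  have hw1 : Real.sign (u 0 + u 2) = Real.sign (v 0) := by
    have := hw 1
    rw [hv1] at this
    simpa [B₁, Matrix.mulVec, dotProduct, Fin.sum_univ_succ] using this
  have hw2 : Real.sign (u 0 + u 3) = Real.sign (v 2) := by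
    have := hw 2
    simpa [B₁, Matrix.mulVec, dotProduct, Fin.sum_univ_succ] using this
  have hw3 : Real.sign (u 1 + u 2) = Real.sign (v 2) := by
    have := hw 3
    rw [hv3] at this
    simpa [B₁, Matrix.mulVec, dotProduct, Fin.sum_univ_succ] using this
  have h1 := hsign 1; rw [hs1] at h1
  have h2 := hsign 2; rw [hs2] at h2
  have h3 := hsign 3; rw [hs3] at h3
  rcases lt_trichotomy b 0 with hb | hb | hb
  · -- b < 0 : u1 > 0, u2 > 0, u3 < 0
    have hsb : Real.sign (-b) = 1 := Real.sign_of_pos (by linarith)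
    have hu1 : 0 < u 1 := sgn_pos' (by rw [h1, hsb])
    have hu2 : 0 < u 2 := sgn_pos' (by rw [h2, hsb])
    have hu3 : u 3 < 0 := sgn_neg' (by rw [h3, Real.sign_of_neg hb])
    -- sign(u3) = -1 = sign(v0) = sign(u0+u2) so u0 + u2 < 0, u0 < 0
    have hv0 : Real.sign (v 0) = -1 := by rw [← hw0, Real.sign_of_neg hu3]
    have hu02 : u 0 + u 2 < 0 := sgn_neg' (by rw [hw1, hv0])
    have hu0 : u 0 < 0 := by linarith
    -- sign(u1+u2) = 1 = sign(v2) = sign(u0+u3) but u0+u3 < 0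
    have hv2 : Real.sign (v 2) = 1 := by
      rw [← hw3, Real.sign_of_pos (by linarith)]
    have : 0 < u 0 + u 3 := sgn_pos' (by rw [hw2, hv2])
    linarith
  · -- b = 0 : u1 = u2 = u3 = 0, so v = 0, contradiction
    subst hb
    have hu1 : u 1 = 0 := sgn_zero' (by rw [h1]; simp)
    have hu2 : u 2 = 0 := sgn_zero' (by rw [h2]; simp)
    have hu3 : u 3 = 0 := sgn_zero' (by rw [h3]; simp)
    have hv0 : v 0 = 0 := sgn_zero' (by rw [← hw0, hu3, Real.sign_zero])
    have hv2 : v 2 = 0 := sgn_zero' (by rw [← hw3, hu1, hu2]; simp)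
    apply hvne
    funext j
    fin_cases j <;> simp [hv0, hv2, hv1, hv3]
  · -- b > 0 : u1 < 0, u2 < 0, u3 > 0
    have hsb : Real.sign (-b) = -1 := Real.sign_of_neg (by linarith)
    have hu1 : u 1 < 0 := sgn_neg' (by rw [h1, hsb])
    have hu2 : u 2 < 0 := sgn_neg' (by rw [h2, hsb])
    have hu3 : 0 < u 3 := sgn_pos' (by rw [h3, Real.sign_of_pos hb])
    have hv0 : Real.sign (v 0) = 1 := by rw [← hw0, Real.sign_of_pos hu3]
    have hu02 : 0 < u 0 + u 2 := sgn_pos' (by rw [hw1, hv0])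
    have hu0 : 0 < u 0 := by linarith
    have hv2 : Real.sign (v 2) = -1 := by
      rw [← hw3, Real.sign_of_neg (by linarith)]
    have : u 0 + u 3 < 0 := sgn_neg' (by rw [hw2, hv2])
    linarith
end

section
/- Let N ∈ ℝ^{n×r} have rank n−d, B ∈ ℝ^{r×n}, and let S ⊆ ℝ^n be the column span of N. For k ∈ ℝ^r_{>0} define g_k(x) = N·diag(k)·x^B for x ∈ ℝ^n_{>0}, with Jacobian J_{g_k}(x) = N·diag(k·x^B)·Bᵀ·diag(1/x) (where (k·x^B)_j = k_j·(x^B)_j). Then the following are equivalent: (i) there exist k ∈ ℝ^r_{>0}, x ∈ ℝ^n_{>0}, and a nonzero u ∈ S with J_{g_k}(x)·u = 0; (ii) there exists a nonzero u in an orthant intersected by S \ {0} such that σ(Bᵀ·u) ∈ σ(ker N). In particular, the Jacobian of g_k restricted to S is nonsingular for all positive k, x if and only if σ(ker N) ∩ σ(Bᵀ(Σ(S \ {0}))) = ∅. -/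
open Matrix

lemma sign_mul_pos' {c : ℝ} (hc : 0 < c) (x : ℝ) :
    Real.sign (c * x) = Real.sign x := by
  rcases lt_trichotomy x 0 with h|h|h
  · rw [Real.sign_of_neg h, Real.sign_of_neg (mul_neg_of_pos_of_neg hc h)]
  · simp [h]
  · rw [Real.sign_of_pos h, Real.sign_of_pos (mul_pos hc h)]

lemma div_pos_of_sign_eq' {a b : ℝ} (h : Real.sign a = Real.sign b) (ha : a ≠ 0) :
    0 < b / a := by
  rcases lt_trichotomy a 0 with h1|h1|h1
  · rcases lt_trichotomy b 0 with h2|h2|h2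
    · exact div_pos_of_neg_of_neg h2 h1
    · rw [Real.sign_of_neg h1, h2, Real.sign_zero] at h; norm_num at h
    · rw [Real.sign_of_neg h1, Real.sign_of_pos h2] at h; norm_num at h
  · exact absurd h1 ha
  · rcases lt_trichotomy b 0 with h2|h2|h2
    · rw [Real.sign_of_pos h1, Real.sign_of_neg h2] at h; norm_num at h
    · rw [Real.sign_of_pos h1, h2, Real.sign_zero] at h; norm_num at h
    · exact div_pos h2 h1

/-- Injectivity criterion via sign vectors (Müller et al.): for
`g_k(x) = N·diag(k)·x^B` with Jacobian
`J_{g_k}(x) = N·diag(k·x^B)·Bᵀ·diag(1/x)`, there exist positive `k, x` and a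
nonzero `u` in the column span `S` of `N` with `J_{g_k}(x)·u = 0` if and only
if there is a nonzero `u` lying in an orthant met by `S \ {0}` such that the
sign vector of `Bᵀ·u` is the sign vector of some element of `ker N`.  In
particular the Jacobian is nonsingular on `S` for all positive `k, x` iff
`σ(ker N) ∩ σ(Bᵀ(Σ(S \ {0}))) = ∅`. -/
theorem injectivity_sign_vector_criterion
    (n r d : ℕ) (N : Matrix (Fin n) (Fin r) ℝ) (B : Matrix (Fin n) (Fin r) ℝ)
    (hrank : N.rank = n - d) :
    let S : Submodule ℝ (Fin n → ℝ) := LinearMap.range N.mulVecLin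
    let Jmat : (Fin r → ℝ) → (Fin n → ℝ) → Matrix (Fin n) (Fin n) ℝ :=
      fun k x =>
        N * Matrix.diagonal (fun j => k j * ∏ i, Real.rpow (x i) (B i j)) *
          B.transpose * Matrix.diagonal (fun i => (x i)⁻¹)
    let signCond : Prop :=
      ∃ u : Fin n → ℝ, u ≠ 0 ∧
        (∃ s : Fin n → ℝ, s ∈ S ∧ s ≠ 0 ∧ ∀ i, Real.sign (u i) = Real.sign (s i)) ∧
        (∃ v : Fin r → ℝ, N.mulVec v = 0 ∧
          ∀ j, Real.sign ((B.transpose.mulVec u) j) = Real.sign (v j))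
    ((∃ (k : Fin r → ℝ) (x : Fin n → ℝ) (u : Fin n → ℝ),
        (∀ j, 0 < k j) ∧ (∀ i, 0 < x i) ∧ u ∈ S ∧ u ≠ 0 ∧
        (Jmat k x).mulVec u = 0) ↔ signCond) ∧
    ((∀ (k : Fin r → ℝ) (x : Fin n → ℝ),
        (∀ j, 0 < k j) → (∀ i, 0 < x i) →
        ∀ u ∈ S, (Jmat k x).mulVec u = 0 → u = 0) ↔ ¬ signCond) := by
  intro S Jmat signCond
  have expand : ∀ (k : Fin r → ℝ) (x : Fin n → ℝ) (u : Fin n → ℝ),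
      (Jmat k x).mulVec u =
        N.mulVec ((Matrix.diagonal fun j => k j * ∏ i, Real.rpow (x i) (B i j)).mulVec
          (B.transpose.mulVec ((Matrix.diagonal fun i => (x i)⁻¹).mulVec u))) := by
    intro k x u
    simp only [Jmat, Matrix.mulVec_mulVec, Matrix.mul_assoc]
  have key : (∃ (k : Fin r → ℝ) (x : Fin n → ℝ) (u : Fin n → ℝ),
        (∀ j, 0 < k j) ∧ (∀ i, 0 < x i) ∧ u ∈ S ∧ u ≠ 0 ∧
        (Jmat k x).mulVec u = 0) ↔ signCond := by
    constructor
    · rintro ⟨k, x, u, hk, hx, huS, hu0, hJ⟩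
      set u' : Fin n → ℝ := fun i => (x i)⁻¹ * u i with hu'
      have hxinv : ∀ i, 0 < (x i)⁻¹ := fun i => inv_pos.mpr (hx i)
      have hD2 : (Matrix.diagonal fun i => (x i)⁻¹).mulVec u = u' := by
        ext i; simp [Matrix.mulVec_diagonal, hu']
      have hP : ∀ j, 0 < k j * ∏ i, Real.rpow (x i) (B i j) := by
        intro j
        exact mul_pos (hk j) (Finset.prod_pos fun i _ =>
          Real.rpow_pos_of_pos (hx i) _)
      rw [expand, hD2] at hJ
      have hD1 : (Matrix.diagonal fun j => k j * ∏ i, Real.rpow (x i) (B i j)).mulVec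
          (B.transpose.mulVec u') =
          fun j => (k j * ∏ i, Real.rpow (x i) (B i j)) * (B.transpose.mulVec u') j := by
        ext j; rw [Matrix.mulVec_diagonal]
      rw [hD1] at hJ
      refine ⟨u', ?_, ⟨u, huS, hu0, fun i => sign_mul_pos' (hxinv i) (u i)⟩,
        ⟨_, hJ, fun j => (sign_mul_pos' (hP j) _).symm⟩⟩
      intro h
      apply hu0
      funext i
      have h2 : (x i)⁻¹ * u i = 0 := congrFun h i
      rcases mul_eq_zero.mp h2 with h3 | h3
      · exact absurd h3 (ne_of_gt (hxinv i))
      · exact h3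
    · rintro ⟨u, hu0, ⟨s, hsS, hs0, hsign⟩, ⟨v, hNv, hvsign⟩⟩
      set x : Fin n → ℝ := fun i => if u i = 0 then 1 else s i / u i with hxdef
      have hx : ∀ i, 0 < x i := by
        intro i
        by_cases h : u i = 0
        · simp [hxdef, h]
        · simpa [hxdef, h] using div_pos_of_sign_eq' (hsign i) h
      have hD2s : (Matrix.diagonal fun i => (x i)⁻¹).mulVec s = u := by
        ext i
        rw [Matrix.mulVec_diagonal]
        by_cases h : u i = 0
        · have hsi : s i = 0 := by
            have h1 := hsign i
            rw [h, Real.sign_zero] at h1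
            exact Real.sign_eq_zero_iff.mp h1.symm
          simp [h, hsi]
        · have hs : s i ≠ 0 := by
            intro hsi
            apply h
            have h1 := hsign i
            rw [hsi, Real.sign_zero] at h1
            exact Real.sign_eq_zero_iff.mp h1
          simp only [hxdef, if_neg h]
          field_simp
      set w : Fin r → ℝ := B.transpose.mulVec u with hwdef
      set P : Fin r → ℝ := fun j => ∏ i, Real.rpow (x i) (B i j) with hPdef
      have hPpos : ∀ j, 0 < P j := fun j =>
        Finset.prod_pos fun i _ => Real.rpow_pos_of_pos (hx i) _
      set k : Fin r → ℝ := fun j => if w j = 0 then 1 else (v j / w j) / P j with hkdef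
      have hk : ∀ j, 0 < k j := by
        intro j
        by_cases h : w j = 0
        · simp [hkdef, h]
        · simp only [hkdef, if_neg h]
          exact div_pos (div_pos_of_sign_eq' (hvsign j) h) (hPpos j)
      have hD1 : ∀ j, (k j * P j) * w j = v j := by
        intro j
        by_cases h : w j = 0
        · have hvj : v j = 0 := by
            have h1 := hvsign j
            have h2 : w j = 0 := h
            rw [h2, Real.sign_zero] at h1
            exact Real.sign_eq_zero_iff.mp h1.symm
          rw [h, hvj, mul_zero]
        · simp only [hkdef, if_neg h]
          rw [div_mul_cancel₀ _ (hPpos j).ne', div_mul_cancel₀ _ h]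
      refine ⟨k, x, s, hk, hx, hsS, hs0, ?_⟩
      rw [expand, hD2s]
      have hD1' : (Matrix.diagonal fun j => k j * ∏ i, Real.rpow (x i) (B i j)).mulVec
          (B.transpose.mulVec u) = v := by
        ext j
        rw [Matrix.mulVec_diagonal]
        exact hD1 j
      rw [hD1', hNv]
  refine ⟨key, ?_⟩
  rw [← key]
  constructor
  · rintro hall ⟨k, x, u, hk, hx, hS, hne, hJ⟩
    exact hne (hall k x hk hx u hS hJ)
  · intro hne k x hk hx u hS hJ
    by_contra h0
    exact hne ⟨k, x, u, hk, hx, hS, h0, hJ⟩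
end

section
/- For the mass-action phosphotransfer network, with positive constants k₁,…,k₄ and on the steady-state parametrization (x₁, x₂, k₂k₃x₂²/(k₁k₄x₁), x₄, k₂x₂x₄/(k₁x₁)), the sensitivities with respect to the perturbation γ(s) = (sk₁, sk₂, k₃, k₄, x⁰) (simultaneously scaling k₁ and k₂ by s) are all zero: c'_j(0) = 0 for all j = 1,…,5. Equivalently, the steady-state equations k₃x₂x₅ − k₄x₃x₄ = 0 and −k₁x₁x₅ + k₂x₂x₄ = 0 are invariant under simultaneously scaling k₁ and k₂ by any positive factor, so the steady state in a fixed stoichiometric compatibility class does not change. -/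
set_option maxRecDepth 4000


/-- For the phosphotransfer network, simultaneously scaling `k₁` and `k₂` by a
positive factor leaves the steady-state equations invariant, and the
sensitivities with respect to the perturbation `γ(s) = (sk₁, sk₂, k₃, k₄, x⁰)`
are all zero: the right-hand side `J₂·γ'(0) = k₁·(col 1) + k₂·(col 2)`
vanishes at a steady state, so the unique solution of the sensitivity system is
the zero vector. -/
theorem phosphotransfer_scaling_invariance
    (k₁ k₂ k₃ k₄ : ℝ) (hk₁ : 0 < k₁) (hk₂ : 0 < k₂) (hk₃ : 0 < k₃) (hk₄ : 0 < k₄)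
    (x₁ x₂ x₃ x₄ x₅ : ℝ) (hx₁ : 0 < x₁) (hx₂ : 0 < x₂) (hx₃ : 0 < x₃)
    (hx₄ : 0 < x₄) (hx₅ : 0 < x₅)
    (hss₁ : k₃ * x₂ * x₅ - k₄ * x₃ * x₄ = 0)
    (hss₂ : -(k₁ * x₁ * x₅) + k₂ * x₂ * x₄ = 0) :
    (∀ s : ℝ, 0 < s →
      (k₃ * x₂ * x₅ - k₄ * x₃ * x₄ = 0 ∧
        -((s * k₁) * x₁ * x₅) + (s * k₂) * x₂ * x₄ = 0)) ∧
    (∀ J1 : Matrix (Fin 5) (Fin 5) ℝ, IsUnit J1.det →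
      ∀ u : Fin 5 → ℝ,
        J1.mulVec u +
          (k₁ • ![0, -(x₁ * x₅), 0, 0, 0] + k₂ • ![0, x₂ * x₄, 0, 0, 0]) = 0 →
        u = 0) := by
  constructor
  · intro s hs
    refine ⟨hss₁, ?_⟩
    nlinarith [hss₂]
  · intro J1 hdet u hu
    have hvec : (k₁ • ![0, -(x₁ * x₅), 0, 0, 0] + k₂ • ![0, x₂ * x₄, 0, 0, 0] :
        Fin 5 → ℝ) = 0 := by
      funext i
      fin_cases i <;>
        simp [Matrix.cons_val_zero, Matrix.cons_val_one] <;> linarith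
    rw [hvec, add_zero] at hu
    have : J1.mulVec u = J1.mulVec 0 := by simpa using hu
    exact (Matrix.mulVec_injective_iff_isUnit.mpr ((Matrix.isUnit_iff_isUnit_det _).mpr hdet)) this
end
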